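/- With φ_n as defined (φ_n(ξ) = |ξ|^p for |ξ| ≤ n, quadratic extension for |ξ| > n, p ≥ 2), the inequalities |φ_n'(ξ)| ≤ p(1 + φ_n(ξ)) and φ_n''(ξ) ≤ p(p−1)(1 + φ_n(ξ)) hold for all ξ ∈ ℝ. -/

import Mathlib

open Real

noncomputable def phiN (p : ℝ) (n : ℕ) (ξ : ℝ) : ℝ :=
  if |ξ| ≤ (n : ℝ) then |ξ| ^ p
  else (n : ℝ) ^ (p - 2) *
    (p * (p - 1) / 2 * ξ ^ 2 - p * (p - 2) * n * |ξ| + (p - 1) * (p - 2) / 2 * n ^ 2)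

noncomputable def phiN'' (p : ℝ) (n : ℕ) (ξ : ℝ) : ℝ :=
  if |ξ| ≤ (n : ℝ) then p * (p - 1) * |ξ| ^ (p - 2)
  else (n : ℝ) ^ (p - 2) * p * (p - 1)

/-! φ_n is even, so it suffices to bound its derivative on ξ ≥ 0. There φ_n is ξ^p up to n and,
beyond n, the second-order Taylor polynomial of t ↦ t^p at n, so the two pieces have the same
derivative p n^(p-1) at the junction. Below n both bounds reduce to t^q ≤ 1 + t^p for
0 ≤ q ≤ p; beyond n, writing s = ξ - n ≥ 0, they reduce (using n ≥ 1) to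
1 ≤ p(p-1)/2 s² + p n s + n² and (p-1) s + n ≤ p(p-1)/2 s² + p n s + n². -/

open Topology

theorem HasDerivAt.of_nhdsLE_nhdsGE {f g h : ℝ → ℝ} {a f' : ℝ} (hg : HasDerivAt g f' a)
    (hh : HasDerivAt h f' a) (hfg : f =ᶠ[𝓝[≤] a] g)
    (hfh : f =ᶠ[𝓝[≥] a] h) : HasDerivAt f f' a := by
  have hle := hg.hasDerivWithinAt.congr_of_eventuallyEq hfg (hfg.eq_of_nhdsWithin (le_refl a))
  have hge := hh.hasDerivWithinAt.congr_of_eventuallyEq hfh (hfh.eq_of_nhdsWithin (le_refl a))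
  simpa using hle.union hge

theorem Real.rpow_le_one_add_rpow {x q p : ℝ} (hx : 0 ≤ x) (hq : 0 ≤ q) (hqp : q ≤ p) :
    x ^ q ≤ 1 + x ^ p := by
  rcases le_total x 1 with hx1 | hx1
  · linarith [rpow_le_one hx hx1 hq, rpow_nonneg hx p]
  · linarith [rpow_le_rpow_of_exponent_le hx1 hqp]

/-- The quadratic piece of `φ_n`, as a function of `t = |ξ|`, expanded around `t = n`. -/
noncomputable def phiNOuter (p : ℝ) (n : ℕ) (t : ℝ) : ℝ :=
  (n : ℝ) ^ (p - 2) * (p * (p - 1) / 2 * (t - n) ^ 2 + p * n * (t - n) + n ^ 2)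

section phiN

variable {p : ℝ} {n : ℕ} {ξ t : ℝ}

theorem phiN_neg (ξ : ℝ) : phiN p n (-ξ) = phiN p n ξ := by
  simp [phiN]

theorem phiN_abs (ξ : ℝ) : phiN p n |ξ| = phiN p n ξ := by
  rcases abs_choice ξ with h | h <;> rw [h]
  exact phiN_neg ξ

theorem abs_deriv_phiN_abs (ξ : ℝ) : |deriv (phiN p n) (|ξ|)| = |deriv (phiN p n) ξ| := by
  have hodd : deriv (phiN p n) ξ = -deriv (phiN p n) (-ξ) := by
    simpa [phiN_neg] using deriv_comp_neg (f := phiN p n) (x := ξ)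
  rcases abs_choice ξ with h | h <;> rw [h]
  rw [hodd, abs_neg]

theorem phiN_of_abs_le (h : |ξ| ≤ n) : phiN p n ξ = |ξ| ^ p := if_pos h

theorem phiN_eq_phiNOuter (hn : 0 < n) (h : n ≤ t) : phiN p n t = phiNOuter p n t := by
  have hn' : (0 : ℝ) < n := by exact_mod_cast hn
  have ht : |t| = t := abs_of_pos (hn'.trans_le h)
  rcases h.eq_or_lt with rfl | h
  · rw [phiN_of_abs_le ht.le, ht, phiNOuter, sub_self, rpow_sub hn', rpow_two]
    field_simp
    ring
  · rw [phiN, ht, if_neg h.not_ge, phiNOuter]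
    ring

theorem hasDerivAt_phiNOuter (t : ℝ) :
    HasDerivAt (phiNOuter p n) ((n : ℝ) ^ (p - 2) * (p * (p - 1) * (t - n) + p * n)) t := by
  have hs : HasDerivAt (fun x : ℝ ↦ x - n) 1 t := (hasDerivAt_id' t).sub_const _
  unfold phiNOuter
  refine ((((hs.fun_pow 2).const_mul (p * (p - 1) / 2)).fun_add (hs.const_mul (p * n))).add_const
    ((n : ℝ) ^ 2)).const_mul ((n : ℝ) ^ (p - 2)) |>.congr_deriv ?_
  push_cast
  ring

theorem hasDerivAt_phiN_of_abs_lt (hp : 1 < p) (h : |ξ| < n) :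
    HasDerivAt (phiN p n) (p * |ξ| ^ (p - 2) * ξ) ξ := by
  refine (hasDerivAt_abs_rpow ξ hp).congr_of_eventuallyEq ?_
  filter_upwards [(isOpen_lt continuous_abs continuous_const).mem_nhds h] with x hx
  exact phiN_of_abs_le hx.le

theorem hasDerivAt_phiN_of_le (hp : 1 < p) (hn : 0 < n) (h : n ≤ t) :
    HasDerivAt (phiN p n) ((n : ℝ) ^ (p - 2) * (p * (p - 1) * (t - n) + p * n)) t := by
  have hn' : (0 : ℝ) < n := by exact_mod_cast hn
  rcases h.eq_or_lt with rfl | h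
  · have hinner : HasDerivAt (fun x : ℝ ↦ |x| ^ p)
        ((n : ℝ) ^ (p - 2) * (p * (p - 1) * (n - n) + p * n)) (n : ℝ) := by
      convert hasDerivAt_abs_rpow (n : ℝ) hp using 1
      rw [abs_of_pos hn']
      ring
    refine hinner.of_nhdsLE_nhdsGE (hasDerivAt_phiNOuter _) ?_ ?_
    · filter_upwards [self_mem_nhdsWithin, nhdsWithin_le_nhds (Ioi_mem_nhds (neg_lt_self hn'))]
        with x hle hgt
      exact phiN_of_abs_le (abs_le.2 ⟨hgt.le, hle⟩)
    · filter_upwards [self_mem_nhdsWithin] with x hx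
      exact phiN_eq_phiNOuter hn hx
  · refine (hasDerivAt_phiNOuter t).congr_of_eventuallyEq ?_
    filter_upwards [Ioi_mem_nhds h] with x hx
    exact phiN_eq_phiNOuter hn hx.le

theorem rpow_le_phiNOuter (hp : 1 ≤ p) (hn : 0 < n) (ht : n ≤ t) :
    (n : ℝ) ^ (p - 2) ≤ phiNOuter p n t := by
  have hn' : (1 : ℝ) ≤ n := by exact_mod_cast hn
  have htaylor : 1 ≤ p * (p - 1) / 2 * (t - n) ^ 2 + p * n * (t - n) + n ^ 2 := by
    have : 0 ≤ p * (p - 1) / 2 * (t - n) ^ 2 := by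
      have : 0 ≤ p - 1 := by linarith
      positivity
    nlinarith [mul_nonneg (mul_nonneg (by linarith : 0 ≤ p) (by linarith : (0 : ℝ) ≤ n))
      (sub_nonneg.2 ht)]
  exact le_mul_of_one_le_right (rpow_nonneg (by linarith) _) htaylor

theorem deriv_phiNOuter_le (hp : 1 ≤ p) (hn : 0 < n) (ht : n ≤ t) :
    (n : ℝ) ^ (p - 2) * (p * (p - 1) * (t - n) + p * n) ≤ p * phiNOuter p n t := by
  have hn' : (1 : ℝ) ≤ n := by exact_mod_cast hn
  have htaylor :
      (p - 1) * (t - n) + n ≤ p * (p - 1) / 2 * (t - n) ^ 2 + p * n * (t - n) + n ^ 2 := by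
    have : 0 ≤ p * (p - 1) / 2 * (t - n) ^ 2 := by
      have : 0 ≤ p - 1 := by linarith
      positivity
    nlinarith [mul_le_mul_of_nonneg_right (by nlinarith : p - 1 ≤ p * n) (sub_nonneg.2 ht)]
  calc (n : ℝ) ^ (p - 2) * (p * (p - 1) * (t - n) + p * n)
      = p * ((n : ℝ) ^ (p - 2) * ((p - 1) * (t - n) + n)) := by ring
    _ ≤ p * phiNOuter p n t := by
      rw [phiNOuter]
      gcongr

theorem abs_deriv_phiN_le_of_nonneg (hp : 1 < p) (hn : 0 < n) (ht : 0 ≤ t) :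
    |deriv (phiN p n) t| ≤ p * (1 + phiN p n t) := by
  rcases lt_or_ge t n with h | h
  · rw [(hasDerivAt_phiN_of_abs_lt hp ((abs_of_nonneg ht).trans_lt h)).deriv,
      phiN_of_abs_le ((abs_of_nonneg ht).trans_le h.le), abs_of_nonneg ht, mul_assoc,
      ← rpow_add_one' ht (by linarith), abs_of_nonneg (by positivity)]
    gcongr
    exact rpow_le_one_add_rpow ht (by linarith) (by linarith)
  · have hnonneg : 0 ≤ (n : ℝ) ^ (p - 2) * (p * (p - 1) * (t - n) + p * n) := by
      have : 0 ≤ p * (p - 1) * (t - n) := by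
        have : 0 ≤ p - 1 := by linarith
        have : 0 ≤ t - n := by linarith
        positivity
      positivity
    rw [(hasDerivAt_phiN_of_le hp hn h).deriv, phiN_eq_phiNOuter hn h, abs_of_nonneg hnonneg]
    linarith [deriv_phiNOuter_le hp.le hn h]

theorem phiN''_le (hp : 2 ≤ p) (hn : 0 < n) (ξ : ℝ) :
    phiN'' p n ξ ≤ p * (p - 1) * (1 + phiN p n ξ) := by
  have hpp : 0 ≤ p * (p - 1) := by nlinarith
  rcases le_or_gt |ξ| n with h | h
  · rw [phiN'', if_pos h, phiN_of_abs_le h]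
    gcongr
    exact rpow_le_one_add_rpow (abs_nonneg ξ) (by linarith) (by linarith)
  · rw [phiN'', if_neg h.not_ge, ← phiN_abs, phiN_eq_phiNOuter hn h.le, mul_assoc, mul_comm]
    gcongr
    linarith [rpow_le_phiNOuter (p := p) (by linarith) hn h.le]

end phiN

theorem deriv_phiN_bounds (p : ℝ) (hp : 2 ≤ p) (n : ℕ) (hn : 0 < n) (ξ : ℝ) :
    |deriv (phiN p n) ξ| ≤ p * (1 + phiN p n ξ) ∧
    phiN'' p n ξ ≤ p * (p - 1) * (1 + phiN p n ξ) := by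
  refine ⟨?_, phiN''_le hp hn ξ⟩
  rw [← abs_deriv_phiN_abs, ← phiN_abs]
  exact abs_deriv_phiN_le_of_nonneg (by linarith) hn (abs_nonneg ξ)
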